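/- Let u_1,…,u_l, v_1,…,v_m be positive rationals, n_1,…,n_l, m_1,…,m_m positive integers, n = lcm(n_1,…,n_l), c_1,…,c_l integers with ∑_i c_i·(n/n_i) = 1, and x₀ = ∏_i u_i^{−c_i·n/n_i}. Then there exists a positive rational x such that (u_i·x is an n_i-th power for all i) and (v_k·x is not an m_k-th power for all k) if and only if (u_i·u_j⁻¹ is a gcd(n_i,n_j)-th power for all i ≠ j) and (for all k with m_k ∣ n, v_k·x₀ is not an m_k-th power). -/

import Mathlib

/-!
Write `e i = c i * (n / N i)`, so that `∑ i, e i = 1` and `x₀ = ∏ i, u i ^ (-e i)`. Since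
`x = ∏ i, x ^ e i`, we get `x / x₀ = ∏ i, (u i * x) ^ e i`, an `n`-th power whenever every `u i * x`
is an `N i`-th power; this gives the necessity of both conditions. Likewise
`u i * x₀ = ∏ j, (u i / u j) ^ e j`, and `N i ∣ gcd (N i) (N j) * e j` because `lcm (N i) (N j) ∣ n`,
so the gcd condition makes every `u i * x₀` an `N i`-th power. Then `x = x₀ * p ^ n` works for a
prime `p` dividing neither `x₀` nor any `v k`: if `M k ∣ n`, the factor `p ^ n` is an `M k`-th power
and can be cancelled, and otherwise `v k * x` has `p`-adic valuation `n`, not a multiple of `M k`.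
-/

open Filter

section ZPow

variable {G₀ : Type*} [CommGroupWithZero G₀]

lemma prod_zpow_eq_zpow_sum₀ {ι : Type*} (s : Finset ι) (e : ι → ℤ) {x : G₀} (hx : x ≠ 0) :
    ∏ i ∈ s, x ^ e i = x ^ ∑ i ∈ s, e i := by
  induction s using Finset.cons_induction with
  | empty => simp
  | cons i s _ ih => rw [Finset.prod_cons, Finset.sum_cons, ih, zpow_add₀ hx]

lemma prod_mul_zpow_of_sum_eq_one {ι : Type*} {s : Finset ι} {e : ι → ℤ}
    (he : ∑ i ∈ s, e i = 1) {x : G₀} (hx : x ≠ 0) (u : ι → G₀) :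
    ∏ i ∈ s, (x * u i) ^ e i = x * ∏ i ∈ s, u i ^ e i := by
  simp only [mul_zpow, Finset.prod_mul_distrib, prod_zpow_eq_zpow_sum₀ s e hx, he, zpow_one]

end ZPow

section IsPosPow

variable {K : Type*} [Field K] [LinearOrder K]

def IsPosPow (k : ℕ) (q : K) : Prop := ∃ y : K, 0 < y ∧ q = y ^ k

lemma isPosPow_pow {y : K} (hy : 0 < y) (k : ℕ) : IsPosPow k (y ^ k) := ⟨y, hy, rfl⟩

variable [IsStrictOrderedRing K]

lemma isPosPow_one (k : ℕ) : IsPosPow k (1 : K) := ⟨1, one_pos, (one_pow k).symm⟩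

namespace IsPosPow

variable {k : ℕ} {a b q : K}

lemma pos (h : IsPosPow k q) : 0 < q := by
  obtain ⟨y, hy, rfl⟩ := h
  exact pow_pos hy k

lemma mul (ha : IsPosPow k a) (hb : IsPosPow k b) : IsPosPow k (a * b) := by
  obtain ⟨y, hy, rfl⟩ := ha
  obtain ⟨z, hz, rfl⟩ := hb
  exact ⟨y * z, mul_pos hy hz, (mul_pow y z k).symm⟩

lemma inv (h : IsPosPow k q) : IsPosPow k q⁻¹ := by
  obtain ⟨y, hy, rfl⟩ := h
  exact ⟨y⁻¹, inv_pos.mpr hy, (inv_pow y k).symm⟩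

lemma of_mul (hab : IsPosPow k (a * b)) (hb : IsPosPow k b) : IsPosPow k a := by
  simpa [hb.pos.ne'] using hab.mul hb.inv

lemma zpow_of_dvd {n : ℕ} (h : IsPosPow n q) (z : ℤ) (hkz : (k : ℤ) ∣ n * z) :
    IsPosPow k (q ^ z) := by
  obtain ⟨y, hy, rfl⟩ := h
  obtain ⟨t, ht⟩ := hkz
  refine ⟨y ^ t, zpow_pos hy t, ?_⟩
  rw [← zpow_natCast, ← zpow_natCast, ← zpow_mul, ← zpow_mul, ht, mul_comm]

lemma of_dvd {n : ℕ} (h : IsPosPow n q) (hkn : k ∣ n) : IsPosPow k q := by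
  simpa using h.zpow_of_dvd 1 (by simpa using Int.natCast_dvd_natCast.mpr hkn)

lemma prod {ι : Type*} {s : Finset ι} {f : ι → K} (h : ∀ i ∈ s, IsPosPow k (f i)) :
    IsPosPow k (∏ i ∈ s, f i) := by
  induction s using Finset.cons_induction with
  | empty => simpa using isPosPow_one k
  | cons i s _ ih =>
    rw [Finset.prod_cons]
    exact (h i (s.mem_cons_self i)).mul (ih fun j hj => h j (Finset.mem_cons_of_mem hj))

end IsPosPow

lemma isPosPow_gcd_mul_inv {a b : ℕ} {s t x : K} (hx : x ≠ 0) (hs : IsPosPow a (s * x))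
    (ht : IsPosPow b (t * x)) : IsPosPow (a.gcd b) (s * t⁻¹) := by
  have h := (hs.of_dvd (a.gcd_dvd_left b)).mul (ht.of_dvd (a.gcd_dvd_right b)).inv
  rwa [mul_inv, mul_mul_mul_comm, mul_inv_cancel₀ hx, mul_one] at h

end IsPosPow

section Bezout

variable {K : Type*} [Field K] [LinearOrder K] [IsStrictOrderedRing K]
  {ι : Type*} [Fintype ι] {u : ι → K} {N : ι → ℕ} {n : ℕ} {e : ι → ℤ}

lemma isPosPow_mul_inv_prod_zpow_neg (he : ∑ i, e i = 1) (hn : ∀ i, (n : ℤ) ∣ N i * e i)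
    {x : K} (hx : 0 < x) (hux : ∀ i, IsPosPow (N i) (u i * x)) :
    IsPosPow n (x * (∏ i, u i ^ (-e i))⁻¹) := by
  have hprod : x * (∏ i, u i ^ (-e i))⁻¹ = ∏ i, (x * u i) ^ e i := by
    rw [prod_mul_zpow_of_sum_eq_one he hx.ne']
    simp only [zpow_neg, Finset.prod_inv_distrib, inv_inv]
  rw [hprod]
  exact IsPosPow.prod fun i _ => by
    simpa only [mul_comm] using (hux i).zpow_of_dvd (e i) (hn i)

lemma isPosPow_mul_prod_zpow_neg (he : ∑ j, e j = 1) (hu : ∀ i, 0 < u i) (i : ι)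
    (hN : ∀ j, (N i : ℤ) ∣ (N i).gcd (N j) * e j)
    (hgcd : ∀ j, j ≠ i → IsPosPow ((N i).gcd (N j)) (u i * (u j)⁻¹)) :
    IsPosPow (N i) (u i * ∏ j, u j ^ (-e j)) := by
  have hprod : u i * ∏ j, u j ^ (-e j) = ∏ j, (u i * (u j)⁻¹) ^ e j := by
    simp only [prod_mul_zpow_of_sum_eq_one he (hu i).ne', zpow_neg, inv_zpow]
  rw [hprod]
  refine IsPosPow.prod fun j _ => ?_
  by_cases hji : j = i
  · subst hji
    simpa [(hu j).ne'] using isPosPow_one (N j)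
  · exact (hgcd j hji).zpow_of_dvd (e j) (hN j)

end Bezout

lemma IsPosPow.natCast_dvd_padicValRat {k : ℕ} {q : ℚ} (h : IsPosPow k q) (p : ℕ) [Fact p.Prime] :
    (k : ℤ) ∣ padicValRat p q := by
  obtain ⟨y, -, rfl⟩ := h
  rw [padicValRat.pow _]
  exact dvd_mul_right _ _

lemma eventually_padicValRat_eq_zero (q : ℚ) : ∀ᶠ p in atTop, padicValRat p q = 0 := by
  filter_upwards [eventually_gt_atTop q.num.natAbs, eventually_gt_atTop q.den] with p hnum hden
  have hnd : ∀ d : ℕ, d < p → padicValNat p d = 0 := fun d hd => by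
    by_cases hpd : p ∣ d
    · simp [Nat.eq_zero_of_dvd_of_lt hpd hd]
    · exact padicValNat.eq_zero_of_not_dvd hpd
  rw [padicValRat_def, padicValInt, hnd _ hnum, hnd _ hden]
  simp

lemma exists_prime_padicValRat_eq_zero (s : Finset ℚ) :
    ∃ p : ℕ, p.Prime ∧ ∀ q ∈ s, padicValRat p q = 0 :=
  ((Nat.frequently_atTop_iff_infinite.mpr Nat.infinite_setOfPred_prime).and_eventually
    ((eventually_all_finset s).mpr fun q _ => eventually_padicValRat_eq_zero q)).exists

lemma Nat.dvd_gcd_mul_div_of_lcm_dvd {a b n : ℕ} (h : a.lcm b ∣ n) : a ∣ a.gcd b * (n / b) := by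
  have hab : a * b ∣ a.gcd b * n := by
    rw [← Nat.gcd_mul_lcm a b]
    exact Nat.mul_dvd_mul_left _ h
  rw [← Nat.mul_div_assoc _ ((Nat.dvd_lcm_right a b).trans h)]
  exact Nat.dvd_div_of_mul_dvd (mul_comm a b ▸ hab)

lemma exists_pos_isPosPow_and_not_isPosPow {ι κ : Type*} [Fintype κ] {u : ι → ℚ} {v : κ → ℚ}
    {N : ι → ℕ} {M : κ → ℕ} {n : ℕ} (hNn : ∀ i, N i ∣ n) {x₀ : ℚ} (hx₀ : 0 < x₀)
    (hux₀ : ∀ i, IsPosPow (N i) (u i * x₀)) (hvx₀ : ∀ k, M k ∣ n → ¬ IsPosPow (M k) (v k * x₀)) :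
    ∃ x : ℚ, 0 < x ∧ (∀ i, IsPosPow (N i) (u i * x)) ∧ ∀ k, ¬ IsPosPow (M k) (v k * x) := by
  obtain ⟨p, hp, hp0⟩ := exists_prime_padicValRat_eq_zero (insert x₀ (Finset.univ.image v))
  have := Fact.mk hp
  have hpn : IsPosPow n ((p : ℚ) ^ n) := isPosPow_pow (by exact_mod_cast hp.pos) n
  refine ⟨x₀ * p ^ n, mul_pos hx₀ hpn.pos, fun i => ?_, fun k hk => ?_⟩
  · rw [← mul_assoc]
    exact (hux₀ i).mul (hpn.of_dvd (hNn i))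
  rw [← mul_assoc] at hk
  by_cases hMn : M k ∣ n
  · exact hvx₀ k hMn (hk.of_mul (hpn.of_dvd hMn))
  -- `p` divides neither `x₀` nor `v k`, so `v k * x₀ * p ^ n` has `p`-adic valuation `n`.
  have hvk : v k ≠ 0 := left_ne_zero_of_mul (left_ne_zero_of_mul hk.pos.ne')
  have hval : padicValRat p (v k * x₀ * p ^ n) = n := by
    rw [padicValRat.mul (mul_ne_zero hvk hx₀.ne') hpn.pos.ne', padicValRat.mul hvk hx₀.ne',
      padicValRat.pow, padicValRat.self hp.one_lt,
      hp0 _ (Finset.mem_insert_self _ _),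
      hp0 _ (Finset.mem_insert_of_mem (Finset.mem_image_of_mem v (Finset.mem_univ k)))]
    simp
  exact hMn (by exact_mod_cast hval ▸ hk.natCast_dvd_padicValRat p)

theorem stmt_10_general (l m : ℕ) (u : Fin l → ℚ) (hu : ∀ i, 0 < u i)
    (v : Fin m → ℚ)
    (N : Fin l → ℕ)
    (M : Fin m → ℕ)
    (n : ℕ) (hn : n = Finset.univ.lcm N)
    (c : Fin l → ℤ) (hc : ∑ i, c i * ((n : ℤ) / (N i : ℤ)) = 1)
    (x₀ : ℚ) (hx₀ : x₀ = ∏ i, (u i) ^ (-(c i * ((n : ℤ) / (N i : ℤ))))) :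
    (∃ x : ℚ, 0 < x ∧ (∀ i, ∃ y : ℚ, 0 < y ∧ u i * x = y ^ N i) ∧
        (∀ k, ¬ ∃ y : ℚ, 0 < y ∧ v k * x = y ^ M k)) ↔
      (∀ i j, i ≠ j → ∃ y : ℚ, 0 < y ∧ u i * (u j)⁻¹ = y ^ Nat.gcd (N i) (N j)) ∧
        (∀ k, M k ∣ n → ¬ ∃ y : ℚ, 0 < y ∧ v k * x₀ = y ^ M k) := by
  have hNn : ∀ i, N i ∣ n := fun i => hn ▸ Finset.dvd_lcm (Finset.mem_univ i)
  have hx₀pos : 0 < x₀ := hx₀ ▸ Finset.prod_pos fun i _ => zpow_pos (hu i) _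
  constructor
  · rintro ⟨x, hx, hux, hvx⟩
    refine ⟨fun i j _ => isPosPow_gcd_mul_inv hx.ne' (hux i) (hux j), fun k hk hvkx₀ => hvx k ?_⟩
    have hn_dvd : ∀ i, (n : ℤ) ∣ N i * (c i * (n / N i)) := fun i =>
      ⟨c i, by rw [mul_left_comm, Int.mul_ediv_cancel' (Int.natCast_dvd_natCast.mpr (hNn i)),
        mul_comm]⟩
    have hxx₀ : IsPosPow n (x * x₀⁻¹) := hx₀ ▸ isPosPow_mul_inv_prod_zpow_neg hc hn_dvd hx hux
    have h := IsPosPow.mul hvkx₀ (hxx₀.of_dvd hk)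
    rwa [mul_assoc, mul_left_comm x₀, mul_inv_cancel₀ hx₀pos.ne', mul_one] at h
  · rintro ⟨hgcd, hvx₀⟩
    have hN_dvd : ∀ i j, (N i : ℤ) ∣ (N i).gcd (N j) * (c j * (n / N j)) := fun i j => by
      have h := Nat.dvd_gcd_mul_div_of_lcm_dvd (Nat.lcm_dvd (hNn i) (hNn j))
      rw [mul_left_comm]
      exact Dvd.dvd.mul_left (by exact_mod_cast h) _
    have hux₀ : ∀ i, IsPosPow (N i) (u i * x₀) := fun i =>
      hx₀ ▸ isPosPow_mul_prod_zpow_neg hc hu i (hN_dvd i) fun j hji => hgcd i j (Ne.symm hji)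
    exact exists_pos_isPosPow_and_not_isPosPow hNn hx₀pos hux₀ hvx₀

theorem stmt_10 (l m : ℕ) (u : Fin l → ℚ) (hu : ∀ i, 0 < u i)
    (v : Fin m → ℚ) (hv : ∀ k, 0 < v k)
    (N : Fin l → ℕ) (hN : ∀ i, 0 < N i)
    (M : Fin m → ℕ) (hM : ∀ k, 0 < M k)
    (n : ℕ) (hn : n = Finset.univ.lcm N)
    (c : Fin l → ℤ) (hc : ∑ i, c i * ((n : ℤ) / (N i : ℤ)) = 1)
    (x₀ : ℚ) (hx₀ : x₀ = ∏ i, (u i) ^ (-(c i * ((n : ℤ) / (N i : ℤ))))) :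
    (∃ x : ℚ, 0 < x ∧ (∀ i, ∃ y : ℚ, 0 < y ∧ u i * x = y ^ N i) ∧
        (∀ k, ¬ ∃ y : ℚ, 0 < y ∧ v k * x = y ^ M k)) ↔
      (∀ i j, i ≠ j → ∃ y : ℚ, 0 < y ∧ u i * (u j)⁻¹ = y ^ Nat.gcd (N i) (N j)) ∧
        (∀ k, M k ∣ n → ¬ ∃ y : ℚ, 0 < y ∧ v k * x₀ = y ^ M k) :=
  stmt_10_general l m u hu v N M n hn c hc x₀ hx₀
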